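/- Let A be a compact metrizable abelian group with Haar measure h, K a weak-* compact set of strictly aperiodic Borel probability measures on A, and μ₁, μ₂, … a sequence of measures in K. Define ν_k = μ_k * … * μ₁ * ν₀ for an arbitrary initial Borel probability measure ν₀. Then for every continuous function φ: A → ℝ, (1/n)·Σ_{k=0}^{n−1} ∫_A φ dν_k → ∫_A φ dh as n → ∞. -/

import Mathlib

set_option linter.unusedSectionVars false
set_option maxHeartbeats 1000000


open MeasureTheory Topology Filter Pointwise

noncomputable def wass {X : Type*} [MeasurableSpace X] [PseudoMetricSpace X]
    (ν₁ ν₂ : Measure X) : ℝ :=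
  sInf {r | ∃ γ : Measure (X × X), IsProbabilityMeasure γ ∧
    γ.map Prod.fst = ν₁ ∧ γ.map Prod.snd = ν₂ ∧ r = ∫ p, dist p.1 p.2 ∂γ}

def msupp {X : Type*} [TopologicalSpace X] [MeasurableSpace X] (μ : Measure X) : Set X :=
  {x | ∀ U : Set X, x ∈ U → IsOpen U → 0 < μ U}

noncomputable def mconv {A : Type*} [MeasurableSpace A] [Add A] (μ ν : Measure A) : Measure A :=
  (μ.prod ν).map (fun p => p.1 + p.2)

noncomputable def mconvPow {A : Type*} [MeasurableSpace A] [AddMonoid A]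
    (μ : Measure A) : ℕ → Measure A
  | 0 => Measure.dirac 0
  | n + 1 => mconv μ (mconvPow μ n)

noncomputable def mconvProd {A : Type*} [MeasurableSpace A] [AddMonoid A] :
    List (Measure A) → Measure A
  | [] => Measure.dirac 0
  | μ :: l => mconv μ (mconvProd l)

def StrictlyAperiodic {A : Type*} [MeasurableSpace A] [TopologicalSpace A] [AddGroup A]
    (μ : Measure A) : Prop :=
  closure (AddSubsemigroup.closure
    {x : A | ∃ a ∈ msupp μ, ∃ b ∈ msupp μ, x = a - b} : Set A) = Set.univ

open scoped NNReal ENNReal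

section Prelim

variable {A : Type*} [MeasurableSpace A] [MetricSpace A] [CompactSpace A] [BorelSpace A]

lemma cont_integrable {X : Type*} [MeasurableSpace X] [TopologicalSpace X] [CompactSpace X]
    [OpensMeasurableSpace X] [TopologicalSpace.MetrizableSpace X]
    (u : X → ℝ) (hu : Continuous u) (ρ : Measure X) [IsFiniteMeasure ρ] :
    Integrable u ρ := by
  have := BoundedContinuousFunction.integrable (μ := ρ)
    (BoundedContinuousFunction.mkOfCompact ⟨u, hu⟩)
  exact this

lemma not_msupp {X : Type*} [TopologicalSpace X] [MeasurableSpace X] {ρ : Measure X} {x : X}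
    (hx : x ∉ msupp ρ) : ∃ U : Set X, x ∈ U ∧ IsOpen U ∧ ρ U = 0 := by
  simp only [msupp, Set.mem_setOf_eq, not_forall] at hx
  obtain ⟨U, hxU, hUopen, hU⟩ := hx
  exact ⟨U, hxU, hUopen, le_antisymm (le_of_not_gt hU) bot_le⟩

lemma null_of_compact_disjoint_msupp {ρ : Measure A} {C : Set A} (hC : IsCompact C)
    (hdisj : ∀ y ∈ C, y ∉ msupp ρ) : ρ C = 0 := by
  have : ∀ y : A, ∃ U : Set A, IsOpen U ∧ ρ U = 0 ∧ (y ∈ C → y ∈ U) := by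
    intro y
    by_cases hy : y ∈ C
    · obtain ⟨U, h1, h2, h3⟩ := not_msupp (hdisj y hy)
      exact ⟨U, h2, h3, fun _ => h1⟩
    · exact ⟨∅, isOpen_empty, measure_empty, fun h => absurd h hy⟩
  choose U hUopen hUnull hxU using this
  obtain ⟨t, ht⟩ := hC.elim_finite_subcover U hUopen
    (fun x hx => Set.mem_iUnion.mpr ⟨x, hxU x hx⟩)
  refine le_antisymm ?_ bot_le
  calc ρ C ≤ ρ (⋃ x ∈ t, U x) := measure_mono ht
  _ ≤ ∑ x ∈ t, ρ (U x) := measure_biUnion_finset_le t U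
  _ = 0 := by simp [hUnull]

lemma msupp_nonempty (ρ : Measure A) [IsProbabilityMeasure ρ] : (msupp ρ).Nonempty := by
  by_contra hne
  rw [Set.not_nonempty_iff_eq_empty] at hne
  have h0 : ρ Set.univ = 0 :=
    null_of_compact_disjoint_msupp isCompact_univ (fun y _ => by simp [hne])
  simp [measure_univ] at h0

lemma exists_msupp_near (ρ : Measure A) {x : A} {r : ℝ}
    (hpos : ρ (Metric.ball x r) ≠ 0) :
    ∃ y ∈ msupp ρ, dist y x ≤ r := by
  by_contra hcon
  push_neg at hcon
  have h0 : ρ (Metric.closedBall x r) = 0 := by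
    refine null_of_compact_disjoint_msupp (isCompact_closedBall x r) (fun y hy hmem => ?_)
    exact absurd (Metric.mem_closedBall.mp hy) (not_le.mpr (hcon y hmem))
  exact hpos (le_antisymm (le_trans (measure_mono Metric.ball_subset_closedBall) h0.le) bot_le)

-- value equals max on support
lemma eq_max_on_msupp (ρ : Measure A) [IsProbabilityMeasure ρ] {u : A → ℝ} (hu : Continuous u)
    {M : ℝ} (hub : ∀ x, u x ≤ M) (hint : ∫ x, u x ∂ρ = M) :
    ∀ x ∈ msupp ρ, u x = M := by
  intro x₀ hx₀
  by_contra hne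
  have hlt : u x₀ < M := lt_of_le_of_ne (hub x₀) hne
  set ε : ℝ := (M - u x₀) / 2 with hε
  have hεpos : 0 < ε := by rw [hε]; linarith
  set V : Set A := u ⁻¹' (Set.Iio (M - ε)) with hV
  have hVopen : IsOpen V := (isOpen_Iio).preimage hu
  have hx₀V : x₀ ∈ V := by
    simp only [hV, Set.mem_preimage, Set.mem_Iio]
    rw [hε]; linarith
  have hVpos : 0 < ρ V := hx₀ V hx₀V hVopen
  have hVfin : ρ V ≠ ⊤ := (measure_lt_top ρ V).ne
  have hVreal : 0 < (ρ V).toReal := ENNReal.toReal_pos hVpos.ne' hVfin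
  have hint1 : Integrable u ρ := cont_integrable u hu ρ
  have hint2 : Integrable (fun x => M - u x) ρ := (integrable_const M).sub hint1
  have h1 : ∫ x, (M - u x) ∂ρ = 0 := by
    rw [integral_sub (integrable_const M) hint1, hint]
    simp [measure_univ]
  have h2 : ε * (ρ V).toReal ≤ ∫ x in V, (M - u x) ∂ρ := by
    refine Eq.trans_le (b := ρ.real V • ε) (by rw [smul_eq_mul, mul_comm]; rfl) ?_
    apply MeasureTheory.setIntegral_ge_of_const_le hVopen.measurableSet
      (measure_ne_top ρ V)
    · intro x hx
      have : u x < M - ε := hx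
      linarith
    · exact hint2.integrableOn
  have h3 : ∫ x in V, (M - u x) ∂ρ ≤ ∫ x, (M - u x) ∂ρ := by
    apply setIntegral_le_integral hint2
    filter_upwards with x
    simp only [Pi.zero_apply]
    linarith [hub x]
  nlinarith
end Prelim

section Conv

variable {A : Type*} [MeasurableSpace A] [MetricSpace A] [AddCommGroup A]
    [IsTopologicalAddGroup A] [CompactSpace A] [BorelSpace A]

lemma mconv_prob (μ ν : Measure A) [IsProbabilityMeasure μ] [IsProbabilityMeasure ν] :
    IsProbabilityMeasure (mconv μ ν) := by
  have : Measurable (fun p : A × A => p.1 + p.2) := measurable_add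
  exact Measure.isProbabilityMeasure_map this.aemeasurable

lemma integral_mconv (μ ν : Measure A) [IsProbabilityMeasure μ] [IsProbabilityMeasure ν]
    (u : A → ℝ) (hu : Continuous u) :
    ∫ z, u z ∂(mconv μ ν) = ∫ x, ∫ y, u (x + y) ∂ν ∂μ := by
  have hm : Measurable (fun p : A × A => p.1 + p.2) := measurable_add
  rw [mconv, integral_map hm.aemeasurable hu.aestronglyMeasurable]
  exact MeasureTheory.integral_prod _
    (cont_integrable _ (hu.comp continuous_add) _)

-- translation invariance of integral against h
lemma integral_translate (h : Measure A) [IsProbabilityMeasure h]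
    (hinv : ∀ a : A, h.map (fun x => a + x) = h) (u : A → ℝ) (hu : Continuous u) (x : A) :
    ∫ a, u (a + x) ∂h = ∫ a, u a ∂h := by
  have : (fun a : A => a + x) = (fun a : A => x + a) := funext fun a => add_comm a x
  conv_rhs => rw [← hinv x]
  rw [integral_map (by fun_prop) hu.aestronglyMeasurable]
  exact integral_congr_ae (Eventually.of_forall fun a => by simp only []; rw [add_comm])

end Conv

section Sums

variable {A : Type*} [AddCommGroup A]

def DSum (D : ℕ → Set A) (N m : ℕ) : Set A :=
  {s | ∃ c : ℕ → A, (∀ i ∈ Finset.Ioc N m, c i ∈ D i) ∧ s = ∑ i ∈ Finset.Ioc N m, c i}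

lemma DSum_zero_mem {D : ℕ → Set A} (h0 : ∀ i, (0:A) ∈ D i) (N m : ℕ) : (0:A) ∈ DSum D N m :=
  ⟨fun _ => 0, fun i _ => h0 i, (Finset.sum_const_zero).symm⟩

lemma DSum_add {D : ℕ → Set A} {N m l : ℕ} (hNm : N ≤ m) (hml : m ≤ l) {p q : A}
    (hp : p ∈ DSum D N m) (hq : q ∈ DSum D m l) : p + q ∈ DSum D N l := by
  obtain ⟨c₁, hc₁, rfl⟩ := hp
  obtain ⟨c₂, hc₂, rfl⟩ := hq
  refine ⟨fun i => if i ≤ m then c₁ i else c₂ i, fun i hi => ?_, ?_⟩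
  · rw [Finset.mem_Ioc] at hi
    by_cases him : i ≤ m
    · simp only [if_pos him]; exact hc₁ i (Finset.mem_Ioc.mpr ⟨hi.1, him⟩)
    · simp only [if_neg him]; exact hc₂ i (Finset.mem_Ioc.mpr ⟨not_le.mp him, hi.2⟩)
  · rw [← Finset.sum_Ioc_consecutive _ hNm hml]
    congr 1
    · exact Finset.sum_congr rfl fun i hi => (if_pos (Finset.mem_Ioc.mp hi).2).symm
    · exact Finset.sum_congr rfl fun i hi =>
        (if_neg (not_le.mpr (Finset.mem_Ioc.mp hi).1)).symm

lemma DSum_single {D : ℕ → Set A} (h0 : ∀ i, (0:A) ∈ D i) {N i m : ℕ} (hNi : N < i)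
    (him : i ≤ m) {d : A} (hd : d ∈ D i) : d ∈ DSum D N m := by
  refine ⟨fun j => if j = i then d else 0, fun j _ => ?_, ?_⟩
  · by_cases hji : j = i
    · simp only [if_pos hji, hji]; exact hd
    · simp only [if_neg hji]; exact h0 j
  · rw [Finset.sum_ite_eq' (Finset.Ioc N m) i (fun _ => d),
      if_pos (Finset.mem_Ioc.mpr ⟨hNi, him⟩)]

lemma DSum_mono {D : ℕ → Set A} (h0 : ∀ i, (0:A) ∈ D i) {N m l : ℕ} (hNm : N ≤ m) (hml : m ≤ l)
    {p : A} (hp : p ∈ DSum D N m) : p ∈ DSum D N l := by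
  have := DSum_add hNm hml hp (DSum_zero_mem h0 m l)
  rwa [add_zero] at this

-- splitting a difference-sum into two support-sums
lemma DSum_split {S : ℕ → Set A} {N m : ℕ} {p : A}
    (hp : p ∈ DSum (fun i => {x | ∃ α ∈ S i, ∃ β ∈ S i, x = α - β}) N m) :
    ∃ s ∈ DSum S N m, ∃ t ∈ DSum S N m, p = s - t := by
  obtain ⟨c, hc, rfl⟩ := hp
  choose! α hα β hβ hab using hc
  refine ⟨∑ i ∈ Finset.Ioc N m, α i, ⟨α, hα, rfl⟩, ∑ i ∈ Finset.Ioc N m, β i, ⟨β, hβ, rfl⟩, ?_⟩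
  rw [← Finset.sum_sub_distrib]
  exact Finset.sum_congr rfl fun i hi => hab i hi

end Sums

section Main

variable {A : Type*} [MeasurableSpace A] [MetricSpace A] [AddCommGroup A]
    [IsTopologicalAddGroup A] [CompactSpace A] [BorelSpace A]

theorem key
    (hd : ∀ a x y : A, dist (x + a) (y + a) = dist x y)
    (h : Measure A) [IsProbabilityMeasure h]
    (hinv : ∀ a : A, h.map (fun x => a + x) = h)
    (K : Set (ProbabilityMeasure A)) (hK : IsCompact K)
    (hap : ∀ μ ∈ K, StrictlyAperiodic (μ : Measure A))
    (μ : ℕ → ProbabilityMeasure A) (hμK : ∀ n, μ n ∈ K)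
    (ν₀ : Measure A) [IsProbabilityMeasure ν₀]
    (ν : ℕ → Measure A) (hν0 : ν 0 = ν₀)
    (hν : ∀ k : ℕ, ν (k + 1) = mconv (μ (k + 1) : Measure A) (ν k))
    (φ : C(A, ℝ)) :
    Filter.Tendsto (fun n : ℕ => ∫ x, φ x ∂(ν n)) Filter.atTop (𝓝 (∫ x, φ x ∂h)) := by
  classical
  -- probability measures
  have hP : ∀ n, IsProbabilityMeasure (ν n) := by
    intro n
    induction n with
    | zero => rw [hν0]; infer_instance
    | succ k ih => rw [hν k]; exact mconv_prob _ _
  -- metric helpers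
  have dL : ∀ a x y : A, dist (a + x) (a + y) = dist x y := by
    intro a x y; rw [add_comm a x, add_comm a y]; exact hd a x y
  have dneg : ∀ x y : A, dist (-x) (-y) = dist x y := by
    intro x y
    have := hd (x + y) (-x) (-y)
    rw [neg_add_cancel_left] at this
    rw [← this, add_comm x y, neg_add_cancel_left, dist_comm]
  have dsub : ∀ x y x' y' : A, dist (x - y) (x' - y') ≤ dist x x' + dist y y' := by
    intro x y x' y'
    calc dist (x - y) (x' - y') ≤ dist (x - y) (x' - y) + dist (x' - y) (x' - y') :=
      dist_triangle _ _ _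
    _ = dist x x' + dist y y' := by
        rw [sub_eq_add_neg, sub_eq_add_neg, sub_eq_add_neg, hd, dL, dneg]
  have dadd : ∀ x y x' y' : A, dist (x + y) (x' + y') ≤ dist x x' + dist y y' := by
    intro x y x' y'
    calc dist (x + y) (x' + y') ≤ dist (x + y) (x' + y) + dist (x' + y) (x' + y') :=
      dist_triangle _ _ _
    _ = dist x x' + dist y y' := by rw [hd, dL]
  have d0 : ∀ u v : A, dist u v = dist (u - v) 0 := by
    intro u v
    have := hd v (u - v) 0
    rw [sub_add_cancel, zero_add] at this
    exact this ▸ rfl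

  -- the functions f n
  set C : ℝ := ‖φ‖ with hC
  set f : ℕ → A → ℝ := fun n a => ∫ x, φ (a + x) ∂(ν n) with hf
  have hfb : ∀ n a, |f n a| ≤ C := by
    intro n a
    have hP' := hP n
    rw [← Real.norm_eq_abs]
    calc ‖f n a‖ ≤ C * ((ν n) Set.univ).toReal := by
          apply norm_integral_le_of_norm_le_const
          filter_upwards with x
          exact φ.norm_coe_le_norm (a + x)
    _ = C := by simp [measure_univ]
  -- equicontinuity modulus
  have ecmod : ∀ ε : ℝ, 0 < ε → ∃ δ : ℝ, 0 < δ ∧ ∀ (ρ : Measure A), IsProbabilityMeasure ρ →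
      ∀ a b : A, dist a b < δ →
      |(∫ x, φ (a + x) ∂ρ) - (∫ x, φ (b + x) ∂ρ)| ≤ ε := by
    intro ε hε
    have huc : UniformContinuous φ := CompactSpace.uniformContinuous_of_continuous φ.continuous
    obtain ⟨δ, hδ, hδ'⟩ := Metric.uniformContinuous_iff.mp huc ε hε
    refine ⟨δ, hδ, fun ρ hρ a b hab => ?_⟩
    have hint1 : Integrable (fun x => φ (a + x)) ρ :=
      cont_integrable _ (φ.continuous.comp (continuous_const.add continuous_id)) ρ
    have hint2 : Integrable (fun x => φ (b + x)) ρ :=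
      cont_integrable _ (φ.continuous.comp (continuous_const.add continuous_id)) ρ
    rw [← integral_sub hint1 hint2, ← Real.norm_eq_abs]
    calc ‖∫ x, (φ (a + x) - φ (b + x)) ∂ρ‖ ≤ ε * (ρ Set.univ).toReal := by
          apply norm_integral_le_of_norm_le_const
          filter_upwards with x
          have hdab : dist (a + x) (b + x) < δ := by rw [hd]; exact hab
          have := hδ' hdab
          rw [Real.dist_eq] at this
          rw [Real.norm_eq_abs]
          exact this.le
    _ = ε := by simp [measure_univ]
  have hfmod : ∀ ε : ℝ, 0 < ε → ∃ δ : ℝ, 0 < δ ∧ ∀ n (a b : A), dist a b < δ →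
      |f n a - f n b| ≤ ε := by
    intro ε hε
    obtain ⟨δ, hδ, hmod⟩ := ecmod ε hε
    exact ⟨δ, hδ, fun n a b hab => hmod (ν n) (hP n) a b hab⟩
  have hfcont : ∀ n, Continuous (f n) := by
    intro n
    rw [Metric.continuous_iff]
    intro b ε hε
    obtain ⟨δ, hδ, hmod⟩ := hfmod (ε / 2) (by linarith)
    refine ⟨δ, hδ, fun a hab => ?_⟩
    rw [Real.dist_eq]
    calc |f n a - f n b| ≤ ε / 2 := hmod n a b hab
    _ < ε := by linarith
  -- recurrence
  have hrec : ∀ n a, f (n + 1) a = ∫ x, f n (a + x) ∂(μ (n + 1) : Measure A) := by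
    intro n a
    have hP' := hP n
    have hcont : Continuous (fun z => φ (a + z)) :=
      φ.continuous.comp (continuous_const.add continuous_id)
    show ∫ z, φ (a + z) ∂(ν (n + 1)) = _
    rw [hν n, integral_mconv _ _ _ hcont]
    apply integral_congr_ae
    filter_upwards with x
    apply integral_congr_ae
    filter_upwards with y
    rw [← add_assoc]
  -- max and min
  have hmax : ∀ n, ∃ a : A, ∀ x : A, f n x ≤ f n a := by
    intro n
    obtain ⟨a, _, ha⟩ := isCompact_univ.exists_isMaxOn Set.univ_nonempty
      (hfcont n).continuousOn
    exact ⟨a, fun x => ha (Set.mem_univ x)⟩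
  have hmin : ∀ n, ∃ a : A, ∀ x : A, f n a ≤ f n x := by
    intro n
    obtain ⟨a, _, ha⟩ := isCompact_univ.exists_isMinOn Set.univ_nonempty
      (hfcont n).continuousOn
    exact ⟨a, fun x => ha (Set.mem_univ x)⟩
  choose amax hamax using hmax
  choose amin hamin using hmin
  set Mx : ℕ → ℝ := fun n => f n (amax n) with hMx
  set mn : ℕ → ℝ := fun n => f n (amin n) with hmn
  have hManti : Antitone Mx := by
    apply antitone_nat_of_succ_le
    intro n
    have hP' := hP n
    show f (n + 1) (amax (n + 1)) ≤ f n (amax n)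
    rw [hrec n]
    calc ∫ x, f n (amax (n + 1) + x) ∂(μ (n + 1) : Measure A)
        ≤ ∫ _, f n (amax n) ∂(μ (n + 1) : Measure A) := by
          apply integral_mono
            (cont_integrable _ ((hfcont n).comp (continuous_const.add continuous_id)) _)
            (integrable_const _)
          intro x
          exact hamax n _
    _ = f n (amax n) := by simp [measure_univ]
  have hmmono : Monotone mn := by
    apply monotone_nat_of_le_succ
    intro n
    have hP' := hP n
    show f n (amin n) ≤ f (n + 1) (amin (n + 1))
    rw [hrec n]
    calc f n (amin n) = ∫ _, f n (amin n) ∂(μ (n + 1) : Measure A) := by simp [measure_univ]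
    _ ≤ ∫ x, f n (amin (n + 1) + x) ∂(μ (n + 1) : Measure A) := by
          apply integral_mono (integrable_const _)
            (cont_integrable _ ((hfcont n).comp (continuous_const.add continuous_id)) _)
          intro x
          exact hamin n _
  have hmleM : ∀ n, mn n ≤ Mx n := fun n => hamin n (amax n)
  set MM : ℝ := ⨅ n, Mx n with hMM
  set mm : ℝ := ⨆ n, mn n with hmm
  have hMxbdd : BddBelow (Set.range Mx) := by
    refine ⟨-C, fun x hx => ?_⟩
    obtain ⟨n, rfl⟩ := hx
    have := hfb n (amax n); rw [abs_le] at this; exact this.1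
  have hmnbdd : BddAbove (Set.range mn) := by
    refine ⟨C, fun x hx => ?_⟩
    obtain ⟨n, rfl⟩ := hx
    have := hfb n (amin n); rw [abs_le] at this; exact this.2
  have hMtend : Filter.Tendsto Mx Filter.atTop (𝓝 MM) := tendsto_atTop_ciInf hManti hMxbdd
  have hmtend : Filter.Tendsto mn Filter.atTop (𝓝 mm) := tendsto_atTop_ciSup hmmono hmnbdd
  have hMge : ∀ n, MM ≤ Mx n := fun n => ciInf_le hMxbdd n
  have hmle : ∀ n, mn n ≤ mm := fun n => le_ciSup hmnbdd n
  -- integral against h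
  have hinth : ∀ n, ∫ a, f n a ∂h = ∫ x, φ x ∂h := by
    intro n
    have hP' := hP n
    have hswap : ∫ a, ∫ x, φ (a + x) ∂(ν n) ∂h = ∫ x, ∫ a, φ (a + x) ∂h ∂(ν n) := by
      apply MeasureTheory.integral_integral_swap
      exact cont_integrable _ (φ.continuous.comp continuous_add) _
    show ∫ a, ∫ x, φ (a + x) ∂(ν n) ∂h = ∫ x, φ x ∂h
    rw [hswap]
    have : ∀ x : A, ∫ a, φ (a + x) ∂h = ∫ y, φ y ∂h := fun x =>
      integral_translate h hinv φ φ.continuous x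
    rw [integral_congr_ae (Eventually.of_forall fun x => this x)]
    simp [measure_univ]
  -- the key inequality
  have hkey : MM ≤ mm := by
    -- an ultrafilter extending atTop
    set U : Ultrafilter ℕ := Ultrafilter.of Filter.atTop with hUdef
    have hUle : (U : Filter ℕ) ≤ Filter.atTop := Ultrafilter.of_le _
    -- limits of the driving measures
    have hτex : ∀ m : ℕ, ∃ σ ∈ K, Filter.Tendsto (fun j => μ (j + m)) (U : Filter ℕ) (𝓝 σ) := by
      intro m
      obtain ⟨σ, hσK, hσ⟩ := hK.ultrafilter_le_nhds (U.map (fun j => μ (j + m)))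
        (by
          rw [Ultrafilter.coe_map, Filter.le_principal_iff, Filter.mem_map]
          exact Filter.univ_mem' (fun j => hμK (j + m)))
      exact ⟨σ, hσK, by rwa [Ultrafilter.coe_map] at hσ⟩
    choose τ hτK hτlim using hτex
    -- pointwise limits of the functions f (· + m)
    have hgex : ∀ (m : ℕ) (a : A), ∃ r : ℝ,
        Filter.Tendsto (fun j => f (j + m) a) (U : Filter ℕ) (𝓝 r) := by
      intro m a
      obtain ⟨r, _, hr⟩ := (isCompact_Icc (a := -C) (b := C)).ultrafilter_le_nhds
        (U.map (fun j => f (j + m) a))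
        (by
          rw [Ultrafilter.coe_map, Filter.le_principal_iff, Filter.mem_map]
          exact Filter.univ_mem' (fun j => abs_le.mp (hfb (j + m) a)))
      exact ⟨r, by rwa [Ultrafilter.coe_map] at hr⟩
    choose g hglim using hgex
    -- modulus of continuity for the limits
    have hgmod : ∀ ε : ℝ, 0 < ε → ∃ δ : ℝ, 0 < δ ∧ ∀ m (a b : A), dist a b < δ →
        |g m a - g m b| ≤ ε := by
      intro ε hε
      obtain ⟨δ, hδ, hmod⟩ := hfmod ε hε
      refine ⟨δ, hδ, fun m a b hab => ?_⟩
      have ht : Filter.Tendsto (fun j => |f (j + m) a - f (j + m) b|) (U : Filter ℕ)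
          (𝓝 |g m a - g m b|) := ((hglim m a).sub (hglim m b)).abs
      exact le_of_tendsto ht (Filter.Eventually.of_forall fun j => hmod (j + m) a b hab)
    have hgcont : ∀ m, Continuous (g m) := by
      intro m
      rw [Metric.continuous_iff]
      intro b ε hε
      obtain ⟨δ, hδ, hmod⟩ := hgmod (ε / 2) (by linarith)
      refine ⟨δ, hδ, fun a hab => ?_⟩
      rw [Real.dist_eq]
      calc |g m a - g m b| ≤ ε / 2 := hmod m a b hab
      _ < ε := by linarith
    -- uniform convergence along the ultrafilter
    have hunif : ∀ (m : ℕ) (ε : ℝ), 0 < ε →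
        ∀ᶠ j in (U : Filter ℕ), ∀ a : A, |f (j + m) a - g m a| ≤ ε := by
      intro m ε hε
      obtain ⟨δ, hδ, hmod⟩ := hfmod (ε / 3) (by linarith)
      obtain ⟨δ', hδ', hmod'⟩ := hgmod (ε / 3) (by linarith)
      obtain ⟨t, ht⟩ := isCompact_univ.elim_finite_subcover
        (fun x : A => Metric.ball x (min δ δ')) (fun x => Metric.isOpen_ball)
        (fun x _ => Set.mem_iUnion.mpr ⟨x, Metric.mem_ball_self (lt_min hδ hδ')⟩)
      have hev : ∀ᶠ j in (U : Filter ℕ), ∀ x ∈ t, |f (j + m) x - g m x| < ε / 3 := by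
        rw [Filter.eventually_all_finset]
        intro x _
        have h1 := Metric.tendsto_nhds.mp (hglim m x) (ε / 3) (by linarith)
        filter_upwards [h1] with j hj
        rw [Real.dist_eq] at hj
        exact hj
      filter_upwards [hev] with j hj a
      obtain ⟨x, hxt, hax⟩ : ∃ x ∈ t, a ∈ Metric.ball x (min δ δ') := by
        have h5 := ht (Set.mem_univ a)
        simp only [Set.mem_iUnion] at h5
        obtain ⟨x, hxt, hax⟩ := h5
        exact ⟨x, hxt, hax⟩
      rw [Metric.mem_ball, lt_min_iff] at hax
      have h1 : |f (j + m) a - f (j + m) x| ≤ ε / 3 :=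
        hmod (j + m) a x hax.1
      have h2 : |f (j + m) x - g m x| < ε / 3 := hj x hxt
      have h3 : |g m x - g m a| ≤ ε / 3 := by
        refine hmod' m x a ?_
        rw [dist_comm]
        exact hax.2
      calc |f (j + m) a - g m a| ≤ |f (j + m) a - f (j + m) x| + |f (j + m) x - g m a| :=
        abs_sub_le _ _ _
      _ ≤ |f (j + m) a - f (j + m) x| + (|f (j + m) x - g m x| + |g m x - g m a|) := by
          linarith [abs_sub_le (f (j + m) x) (g m x) (g m a)]
      _ ≤ ε := by linarith
    -- limits of the maxima
    have hMshift : ∀ m, Filter.Tendsto (fun j => Mx (j + m)) (U : Filter ℕ) (𝓝 MM) := by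
      intro m
      exact (hMtend.comp (tendsto_add_atTop_nat m)).mono_left hUle
    have hmshift : ∀ m, Filter.Tendsto (fun j => mn (j + m)) (U : Filter ℕ) (𝓝 mm) := by
      intro m
      exact (hmtend.comp (tendsto_add_atTop_nat m)).mono_left hUle
    have hgub : ∀ m a, g m a ≤ MM := by
      intro m a
      exact le_of_tendsto_of_tendsto' (hglim m a) (hMshift m) (fun j => hamax (j + m) a)
    have hglb : ∀ m a, mm ≤ g m a := by
      intro m a
      exact le_of_tendsto_of_tendsto' (hmshift m) (hglim m a) (fun j => hamin (j + m) a)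
    -- the maxima and minima of the limit functions
    have hgmax : ∀ m, ∃ a : A, g m a = MM := by
      intro m
      obtain ⟨a, _, ha⟩ := isCompact_univ.exists_isMaxOn Set.univ_nonempty
        (hgcont m).continuousOn
      refine ⟨a, le_antisymm (hgub m a) (le_of_forall_pos_le_add fun ε hε => ?_)⟩
      obtain ⟨j, hj⟩ := (hunif m ε hε).exists
      have h1 := hj (amax (j + m))
      have h2 : g m (amax (j + m)) ≤ g m a := ha (Set.mem_univ _)
      have h3 : MM ≤ Mx (j + m) := hMge _
      rw [abs_le] at h1
      have : Mx (j + m) = f (j + m) (amax (j + m)) := rfl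
      linarith [h1.1]
    have hgmin : ∀ m, ∃ a : A, g m a = mm := by
      intro m
      obtain ⟨a, _, ha⟩ := isCompact_univ.exists_isMinOn Set.univ_nonempty
        (hgcont m).continuousOn
      refine ⟨a, le_antisymm ?_ (hglb m a)⟩
      refine sub_nonpos.mp (le_of_forall_pos_le_add fun ε hε => ?_)
      obtain ⟨j, hj⟩ := (hunif m ε hε).exists
      have h1 := hj (amin (j + m))
      have h2 : g m a ≤ g m (amin (j + m)) := ha (Set.mem_univ _)
      have h3 : mn (j + m) ≤ mm := hmle _
      rw [abs_le] at h1
      have : mn (j + m) = f (j + m) (amin (j + m)) := rfl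
      linarith [h1.2]
    choose am ham using hgmax
    choose bm hbm using hgmin
    -- the recurrence for the limit functions
    have hgrec : ∀ m a, g (m + 1) a = ∫ x, g m (a + x) ∂(τ (m + 1) : Measure A) := by
      intro m a
      have hgc : Continuous (fun x => g m (a + x)) :=
        (hgcont m).comp (continuous_const.add continuous_id)
      have hterm2 : Filter.Tendsto
          (fun j => ∫ x, g m (a + x) ∂(μ (j + (m + 1)) : Measure A)) (U : Filter ℕ)
          (𝓝 (∫ x, g m (a + x) ∂(τ (m + 1) : Measure A))) := by
        have := (MeasureTheory.ProbabilityMeasure.tendsto_iff_forall_integral_tendsto.mp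
          (hτlim (m + 1))) (BoundedContinuousFunction.mkOfCompact ⟨fun x => g m (a + x), hgc⟩)
        simpa using this
      have hterm1 : Filter.Tendsto
          (fun j => ∫ x, (f (j + m) (a + x) - g m (a + x)) ∂(μ (j + (m + 1)) : Measure A))
          (U : Filter ℕ) (𝓝 0) := by
        rw [Metric.tendsto_nhds]
        intro ε hε
        filter_upwards [hunif m (ε / 2) (by linarith)] with j hj
        rw [Real.dist_eq, sub_zero]
        have hb : |∫ x, (f (j + m) (a + x) - g m (a + x)) ∂(μ (j + (m + 1)) : Measure A)|
            ≤ ε / 2 := by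
          rw [← Real.norm_eq_abs]
          calc ‖∫ x, (f (j + m) (a + x) - g m (a + x)) ∂(μ (j + (m + 1)) : Measure A)‖
              ≤ (ε / 2) * ((μ (j + (m + 1)) : Measure A) Set.univ).toReal := by
                apply norm_integral_le_of_norm_le_const
                filter_upwards with x
                rw [Real.norm_eq_abs]
                exact hj (a + x)
          _ = ε / 2 := by simp [measure_univ]
        linarith
      have hsum := hterm1.add hterm2
      rw [zero_add] at hsum
      have heq : ∀ j : ℕ,
          (∫ x, (f (j + m) (a + x) - g m (a + x)) ∂(μ (j + (m + 1)) : Measure A))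
            + (∫ x, g m (a + x) ∂(μ (j + (m + 1)) : Measure A)) = f (j + (m + 1)) a := by
        intro j
        have hP' := hP (j + m)
        have hfi : Integrable (fun x => f (j + m) (a + x)) (μ (j + (m + 1)) : Measure A) :=
          cont_integrable _ ((hfcont (j + m)).comp (continuous_const.add continuous_id)) _
        have hgi : Integrable (fun x => g m (a + x)) (μ (j + (m + 1)) : Measure A) :=
          cont_integrable _ hgc _
        rw [integral_sub hfi hgi, sub_add_cancel]
        exact (hrec (j + m) a).symm
      have hsum' : Filter.Tendsto (fun j => f (j + (m + 1)) a) (U : Filter ℕ)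
          (𝓝 (∫ x, g m (a + x) ∂(τ (m + 1) : Measure A))) := by
        apply hsum.congr heq
      exact tendsto_nhds_unique (hglim (m + 1) a) hsum'
    -- propagation of maxima along supports
    have hprop : ∀ m (a : A), g m a = MM →
        ∀ s ∈ DSum (fun i => msupp (τ i : Measure A)) 0 m, g 0 (a + s) = MM := by
      intro m
      induction m with
      | zero =>
        intro a ha s hs
        obtain ⟨c, _, rfl⟩ := hs
        simpa using ha
      | succ m ih =>
        intro a ha s hs
        have hmsup : ∀ x ∈ msupp (τ (m + 1) : Measure A), g m (a + x) = MM := by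
          apply eq_max_on_msupp (τ (m + 1) : Measure A) (u := fun x => g m (a + x))
            ((hgcont m).comp (continuous_const.add continuous_id))
            (fun x => hgub m (a + x))
          rw [← hgrec m a]
          exact ha
        obtain ⟨c, hc, rfl⟩ := hs
        rw [Finset.sum_Ioc_succ_top (Nat.zero_le m)]
        have hx := hmsup (c (m + 1)) (hc (m + 1) (Finset.mem_Ioc.mpr ⟨Nat.succ_pos m, le_refl _⟩))
        have hS : (∑ i ∈ Finset.Ioc 0 m, c i) ∈ DSum (fun i => msupp (τ i : Measure A)) 0 m :=
          ⟨c, fun i hi => hc i (Finset.Ioc_subset_Ioc (le_refl 0) (Nat.le_succ m) hi), rfl⟩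
        have hres := ih (a + c (m + 1)) hx _ hS
        have harr : a + (∑ i ∈ Finset.Ioc 0 m, c i + c (m + 1))
            = a + c (m + 1) + ∑ i ∈ Finset.Ioc 0 m, c i := by abel
        rw [harr]
        exact hres
    have hpropmin : ∀ m (a : A), g m a = mm →
        ∀ s ∈ DSum (fun i => msupp (τ i : Measure A)) 0 m, g 0 (a + s) = mm := by
      intro m
      induction m with
      | zero =>
        intro a ha s hs
        obtain ⟨c, _, rfl⟩ := hs
        simpa using ha
      | succ m ih =>
        intro a ha s hs
        have hmsup : ∀ x ∈ msupp (τ (m + 1) : Measure A), g m (a + x) = mm := by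
          have hneg : ∀ x ∈ msupp (τ (m + 1) : Measure A), -(g m (a + x)) = -mm := by
            apply eq_max_on_msupp (τ (m + 1) : Measure A) (u := fun x => -(g m (a + x)))
              (((hgcont m).comp (continuous_const.add continuous_id)).neg)
              (fun x => neg_le_neg (hglb m (a + x)))
            rw [integral_neg, ← hgrec m a, ha]
          intro x hx
          have := hneg x hx
          linarith
        obtain ⟨c, hc, rfl⟩ := hs
        rw [Finset.sum_Ioc_succ_top (Nat.zero_le m)]
        have hx := hmsup (c (m + 1)) (hc (m + 1) (Finset.mem_Ioc.mpr ⟨Nat.succ_pos m, le_refl _⟩))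
        have hS : (∑ i ∈ Finset.Ioc 0 m, c i) ∈ DSum (fun i => msupp (τ i : Measure A)) 0 m :=
          ⟨c, fun i hi => hc i (Finset.Ioc_subset_Ioc (le_refl 0) (Nat.le_succ m) hi), rfl⟩
        have hres := ih (a + c (m + 1)) hx _ hS
        have harr : a + (∑ i ∈ Finset.Ioc 0 m, c i + c (m + 1))
            = a + c (m + 1) + ∑ i ∈ Finset.Ioc 0 m, c i := by abel
        rw [harr]
        exact hres
    -- nonemptiness of supports, zero membership
    have hms_ne : ∀ i, (msupp (τ i : Measure A)).Nonempty := fun i => msupp_nonempty _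
    have hD0 : ∀ i, (0:A) ∈ (fun i => {x : A | ∃ α ∈ msupp (τ i : Measure A),
        ∃ β ∈ msupp (τ i : Measure A), x = α - β}) i := by
      intro i
      obtain ⟨x, hx⟩ := hms_ne i
      exact ⟨x, hx, x, hx, (sub_self x).symm⟩
    -- cluster of the τ sequence in K
    obtain ⟨σs, hσsK, hσslim'⟩ := hK.ultrafilter_le_nhds (U.map τ)
      (by
        rw [Ultrafilter.coe_map, Filter.le_principal_iff, Filter.mem_map]
        exact Filter.univ_mem' (fun i => hτK i))
    have hσslim : Filter.Tendsto τ (U : Filter ℕ) (𝓝 σs) := by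
      rwa [Ultrafilter.coe_map] at hσslim'
    -- cluster of the maximizer-minimizer differences
    obtain ⟨cs, _, hcs'⟩ := isCompact_univ.ultrafilter_le_nhds
      (U.map (fun m => am m - bm m))
      (by rw [Filter.le_principal_iff]; exact Filter.univ_mem)
    have hcs : Filter.Tendsto (fun m => am m - bm m) (U : Filter ℕ) (𝓝 cs) := by
      rwa [Ultrafilter.coe_map] at hcs'
    -- support points of σs are approximated by support points of τ i, U-often
    have hsuppnear : ∀ (x : A) (r : ℝ), 0 < r → x ∈ msupp (σs : Measure A) →
        ∀ᶠ i in (U : Filter ℕ), ∃ y ∈ msupp (τ i : Measure A), dist y x ≤ r := by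
      intro x r hr hx
      have hball : (0:ENNReal) < (σs : Measure A) (Metric.ball x r) :=
        hx _ (Metric.mem_ball_self hr) Metric.isOpen_ball
      have hlim := MeasureTheory.ProbabilityMeasure.le_liminf_measure_open_of_tendsto
        hσslim (Metric.isOpen_ball (x := x) (ε := r))
      by_contra hcon
      have hcon' : ∀ᶠ i in (U : Filter ℕ), ¬ ∃ y ∈ msupp (τ i : Measure A), dist y x ≤ r := by
        rwa [Filter.not_eventually, Ultrafilter.frequently_iff_eventually] at hcon
      have hev0 : ∀ᶠ i in (U : Filter ℕ), (τ i : Measure A) (Metric.ball x r) = 0 := by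
        filter_upwards [hcon'] with i hi
        by_contra h0
        exact hi (exists_msupp_near _ h0)
      have hliminf0 : Filter.liminf (fun i => (τ i : Measure A) (Metric.ball x r))
          (U : Filter ℕ) = 0 := by
        have he : Filter.liminf (fun i => (τ i : Measure A) (Metric.ball x r)) (U : Filter ℕ)
            = Filter.liminf (fun _ => (0:ENNReal)) (U : Filter ℕ) := Filter.liminf_congr hev0
        rw [he, Filter.liminf_const]
      rw [hliminf0] at hlim
      exact absurd (le_antisymm hlim (zero_le (α := ENNReal))) hball.ne'
    -- generators are approximated by DSums
    have hgen : ∀ d ∈ {x : A | ∃ a ∈ msupp (σs : Measure A), ∃ b ∈ msupp (σs : Measure A),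
        x = a - b}, ∀ ε : ℝ, 0 < ε → ∀ N : ℕ, ∃ m, N < m ∧
        ∃ p ∈ DSum (fun i => {x : A | ∃ α ∈ msupp (τ i : Measure A),
          ∃ β ∈ msupp (τ i : Measure A), x = α - β}) N m, dist p d < ε := by
      rintro d ⟨α, hα, β, hβ, rfl⟩ ε hε N
      have h1 := hsuppnear α (ε / 4) (by linarith) hα
      have h2 := hsuppnear β (ε / 4) (by linarith) hβ
      have h3 : ∀ᶠ i in (U : Filter ℕ), N < i :=
        (Filter.eventually_gt_atTop N).filter_mono hUle
      obtain ⟨i, ⟨⟨α', hα', hαd⟩, ⟨β', hβ', hβd⟩⟩, hiN⟩ := ((h1.and h2).and h3).exists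
      refine ⟨i, hiN, α' - β',
        DSum_single hD0 hiN (le_refl i) ⟨α', hα', β', hβ', rfl⟩, ?_⟩
      calc dist (α' - β') (α - β) ≤ dist α' α + dist β' β := dsub _ _ _ _
      _ ≤ ε / 4 + ε / 4 := add_le_add hαd hβd
      _ < ε := by linarith
    -- the whole generated subsemigroup is approximated
    have hsemi : ∀ w ∈ (AddSubsemigroup.closure {x : A | ∃ a ∈ msupp (σs : Measure A),
        ∃ b ∈ msupp (σs : Measure A), x = a - b} : AddSubsemigroup A),
        ∀ ε : ℝ, 0 < ε → ∀ N : ℕ, ∃ m, N < m ∧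
        ∃ p ∈ DSum (fun i => {x : A | ∃ α ∈ msupp (τ i : Measure A),
          ∃ β ∈ msupp (τ i : Measure A), x = α - β}) N m, dist p w < ε := by
      intro w hw
      induction hw using AddSubsemigroup.closure_induction with
      | mem x hx => exact hgen x hx
      | add x y hx hy ihx ihy =>
        intro ε hε N
        obtain ⟨m₁, hm₁, p₁, hp₁, hd₁⟩ := ihx (ε / 2) (by linarith) N
        obtain ⟨m₂, hm₂, p₂, hp₂, hd₂⟩ := ihy (ε / 2) (by linarith) m₁
        refine ⟨m₂, lt_trans hm₁ hm₂, p₁ + p₂, DSum_add hm₁.le hm₂.le hp₁ hp₂, ?_⟩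
        calc dist (p₁ + p₂) (x + y) ≤ dist p₁ x + dist p₂ y := dadd _ _ _ _
        _ < ε := by linarith
    -- conclusion
    have hfinal : ∀ ε : ℝ, 0 < ε → MM ≤ mm + ε := by
      intro ε hε
      obtain ⟨δ, hδ, hmodg⟩ := hgmod ε hε
      have hwmem : -cs ∈ closure ((AddSubsemigroup.closure {x : A | ∃ a ∈ msupp (σs : Measure A),
          ∃ b ∈ msupp (σs : Measure A), x = a - b} : AddSubsemigroup A) : Set A) := by
        rw [hap σs hσsK]
        trivial
      obtain ⟨w', hw', hww⟩ := Metric.mem_closure_iff.mp hwmem (δ / 3) (by linarith)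
      obtain ⟨m₁, hm₁, p, hp, hpw⟩ := hsemi w' hw' (δ / 3) (by linarith) 0
      have hG : ∀ᶠ m in (U : Filter ℕ), dist (am m - bm m) cs < δ / 3 := by
        have := Metric.tendsto_nhds.mp hcs (δ / 3) (by linarith)
        exact this
      obtain ⟨m', hm'G, hm'ge⟩ :=
        (hG.and ((Filter.eventually_ge_atTop m₁).filter_mono hUle)).exists
      have hp' : p ∈ DSum (fun i => {x : A | ∃ α ∈ msupp (τ i : Measure A),
          ∃ β ∈ msupp (τ i : Measure A), x = α - β}) 0 m' :=
        DSum_mono hD0 (Nat.zero_le m₁) hm'ge hp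
      obtain ⟨s, hs, t, ht, hpst⟩ := DSum_split hp'
      have hu : g 0 (am m' + s) = MM := hprop m' (am m') (ham m') s hs
      have hv : g 0 (bm m' + t) = mm := hpropmin m' (bm m') (hbm m') t ht
      have he : (am m' + s) - (bm m' + t) = (am m' - bm m') + p := by rw [hpst]; abel
      have e0 : cs + -cs = (0:A) := by abel
      have hdist : dist (am m' + s) (bm m' + t) < δ := by
        rw [d0, he]
        have h4 : dist ((am m' - bm m') + p) 0 ≤
            dist ((am m' - bm m') + p) (cs + p) + dist (cs + p) (cs + w')
              + dist (cs + w') 0 := dist_triangle4 _ _ _ _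
        have e1 : dist ((am m' - bm m') + p) (cs + p) = dist (am m' - bm m') cs := hd p _ _
        have e2 : dist (cs + p) (cs + w') = dist p w' := dL cs p w'
        have e3 : dist (cs + w') 0 < δ / 3 := by
          rw [← e0, dL]
          rw [dist_comm]
          exact hww
        rw [e1, e2] at h4
        linarith [hm'G, hpw]
      have hfin := hmodg 0 _ _ hdist
      rw [hu, hv, abs_le] at hfin
      linarith [hfin.1]
    exact le_of_forall_pos_le_add hfinal

  -- conclude
  have hsq : ∀ n, |(∫ x, φ x ∂(ν n)) - ∫ x, φ x ∂h| ≤ Mx n - mn n := by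
    intro n
    have hP' := hP n
    have h1 : (∫ x, φ x ∂(ν n)) = f n 0 := by
      show _ = ∫ x, φ (0 + x) ∂(ν n)
      apply integral_congr_ae
      filter_upwards with x
      rw [zero_add]
    have h2 : mn n ≤ f n 0 := hamin n 0
    have h3 : f n 0 ≤ Mx n := hamax n 0
    have h4 : mn n ≤ ∫ x, φ x ∂h := by
      rw [← hinth n]
      calc mn n = ∫ _, mn n ∂h := by simp [measure_univ]
      _ ≤ ∫ a, f n a ∂h := by
          apply integral_mono (integrable_const _) (cont_integrable _ (hfcont n) _)
          intro x; exact hamin n x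
    have h5 : (∫ x, φ x ∂h) ≤ Mx n := by
      rw [← hinth n]
      calc ∫ a, f n a ∂h ≤ ∫ _, Mx n ∂h := by
            apply integral_mono (cont_integrable _ (hfcont n) _) (integrable_const _)
            intro x; exact hamax n x
      _ = Mx n := by simp [measure_univ]
    rw [h1, abs_le]
    constructor <;> linarith
  have : Filter.Tendsto (fun n => Mx n - mn n) Filter.atTop (𝓝 0) := by
    have := hMtend.sub hmtend
    have h0 : MM - mm = 0 := by
      have : mm ≤ MM := by
        have : ∀ n, mn n ≤ MM := by
          intro n
          -- mn n ≤ mn k ≤ Mx k for all k ≥ n, so mn n ≤ inf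
          apply le_ciInf
          intro k
          rcases le_total n k with hnk | hkn
          · exact (hmmono hnk).trans (hmleM k)
          · exact (hmleM n).trans (hManti hkn)
        exact ciSup_le this
      linarith [hkey]
    rwa [h0] at this
  have := squeeze_zero_norm (fun n => by rw [Real.norm_eq_abs]; exact hsq n) this
  rwa [tendsto_sub_nhds_zero_iff] at this

end Main



theorem stmt14 {A : Type*} [MeasurableSpace A] [MetricSpace A] [AddCommGroup A]
    [IsTopologicalAddGroup A] [CompactSpace A] [BorelSpace A]
    (hd : ∀ a x y : A, dist (x + a) (y + a) = dist x y)
    (h : Measure A) [IsProbabilityMeasure h]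
    (hinv : ∀ a : A, h.map (fun x => a + x) = h)
    (K : Set (ProbabilityMeasure A)) (hK : IsCompact K)
    (hap : ∀ μ ∈ K, StrictlyAperiodic (μ : Measure A))
    (μ : ℕ → ProbabilityMeasure A) (hμK : ∀ n, μ n ∈ K)
    (ν₀ : Measure A) [IsProbabilityMeasure ν₀]
    (ν : ℕ → Measure A) (hν0 : ν 0 = ν₀)
    (hν : ∀ k : ℕ, ν (k + 1) = mconv (μ (k + 1) : Measure A) (ν k))
    (φ : C(A, ℝ)) :
    Tendsto (fun n : ℕ =>
        (n : ℝ)⁻¹ * ∑ k ∈ Finset.range n, ∫ x, φ x ∂(ν k))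
      atTop (𝓝 (∫ x, φ x ∂h)) := by
  have hmain := key hd h hinv K hK hap μ hμK ν₀ ν hν0 hν φ
  have hces := hmain.cesaro
  simpa [smul_eq_mul] using hces
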